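/- arXiv:2312.12099 — 9 statements merged into one kernel-verified Lean document; each statement's English description precedes it below -/
import Mathlib

section
/- Let R be a commutative ring, k ≥ 1, and let f, g, h, u ∈ R[x_1,...,x_k] with h and u unit-valued on R (i.e., every evaluation at a point of R^k lands in R^×). Then f + x_{k+1}·u and g + x_{k+1}·h induce the same function on R^{k+1} if and only if f and g induce the same function on R^k and u and h induce the same function on R^k. -/
open MvPolynomial

/-- For `f, g, h, u ∈ R[x_1,…,x_k]` with `h`, `u` unit-valued on `R`,
the polynomials `f + x_{k+1}·u` and `g + x_{k+1}·h` induce the same function on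
`R^{k+1}` iff `f ≡ g` and `u ≡ h` as functions on `R^k`. -/
theorem eq_fun_add_lastVar_mul_iff (R : Type*) [CommRing R] (k : ℕ) (hk : 1 ≤ k)
    (f g h u : MvPolynomial (Fin k) R)
    (hh : ∀ v : Fin k → R, IsUnit (eval v h))
    (hu : ∀ v : Fin k → R, IsUnit (eval v u)) :
    (∀ w : Fin (k + 1) → R,
        eval w (rename Fin.castSucc f + X (Fin.last k) * rename Fin.castSucc u) =
        eval w (rename Fin.castSucc g + X (Fin.last k) * rename Fin.castSucc h)) ↔
      ((∀ v : Fin k → R, eval v f = eval v g) ∧ (∀ v : Fin k → R, eval v u = eval v h)) := by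
  have key : ∀ (v : Fin k → R) (t : R) (p : MvPolynomial (Fin k) R),
      eval (Fin.snoc v t) (rename Fin.castSucc p) = eval v p := by
    intro v t p
    rw [eval_rename]
    have : Fin.snoc v t ∘ Fin.castSucc = v := by ext i; simp
    rw [this]
  constructor
  · intro H
    have H' : ∀ (v : Fin k → R) (t : R),
        eval v f + t * eval v u = eval v g + t * eval v h := by
      intro v t
      have := H (Fin.snoc v t)
      simpa [key, Fin.snoc_last] using this
    have hfg : ∀ v, eval v f = eval v g := by
      intro v; simpa using H' v 0
    refine ⟨hfg, fun v => ?_⟩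
    have := H' v 1
    rw [hfg v] at this
    simpa using this
  · rintro ⟨hfg, huh⟩ w
    have hw : w = Fin.snoc (fun i => w i.castSucc) (w (Fin.last k)) := by
      exact (Fin.snoc_init_self w).symm
    rw [hw]
    simp [key, Fin.snoc_last, hfg, huh]
end

section
/- Let R be a commutative ring, n > 1, f_1 ∈ R[x_1] a permutation polynomial on R (i.e., its induced function R → R is bijective), and for i = 2,...,n let f_i ∈ R[x_1,...,x_{i-1}] and g_i ∈ R[x_1,...,x_{i-1}] with g_i unit-valued on R. Then the vector-polynomial (f_1, f_2 + x_2 g_2, ..., f_n + x_n g_n) induces a bijection of R^n. -/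
open MvPolynomial

/-- The triangular vector-polynomial
`(f₁, f₂ + x₂·g₂, …, f_n + x_n·g_n)` — with `f₁` a permutation polynomial on `R`,
`f_i, g_i` in the first `i-1` variables and each `g_i` unit-valued — induces a
bijection of `R^n`.  (Indices are 0-based: component `0` is the one-variable
permutation polynomial `h`.) -/
theorem triangular_induces_bijection (R : Type*) [CommRing R] (n : ℕ) (hn : 1 < n)
    (h : Polynomial R) (hperm : Function.Bijective fun a : R => h.eval a)
    (F G : (i : Fin n) → MvPolynomial (Fin i.val) R)
    (hG : ∀ i : Fin n, i.val ≠ 0 → ∀ v : Fin i.val → R, IsUnit (eval v (G i))) :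
    Function.Bijective (fun (v : Fin n → R) (i : Fin n) =>
      if i.val = 0 then h.eval (v i)
      else eval (fun j : Fin i.val => v (Fin.castLE i.isLt.le j)) (F i) +
        v i * eval (fun j : Fin i.val => v (Fin.castLE i.isLt.le j)) (G i)) := by
  constructor
  · intro v1 v2 hv
    have key : ∀ k : ℕ, ∀ i : Fin n, i.val = k → v1 i = v2 i := by
      intro k
      induction k using Nat.strong_induction_on with
      | _ k ih =>
      intro i hik
      have hcomp := congrFun hv i
      dsimp only at hcomp
      have heq : (fun j : Fin i.val => v1 (Fin.castLE i.isLt.le j)) =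
          fun j : Fin i.val => v2 (Fin.castLE i.isLt.le j) := by
        funext j
        exact ih j.val (by omega) (Fin.castLE i.isLt.le j) rfl
      by_cases h0 : i.val = 0
      · rw [if_pos h0, if_pos h0] at hcomp
        exact hperm.injective hcomp
      · rw [if_neg h0, if_neg h0, heq] at hcomp
        have hu := hG i h0 (fun j => v2 (Fin.castLE i.isLt.le j))
        have hmul := add_left_cancel hcomp
        exact hu.mul_right_cancel hmul
    funext i
    exact key i.val i rfl
  · intro w
    let e := Equiv.ofBijective _ hperm
    let val : (k : ℕ) → (Fin k → R) → R := fun k p =>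
      if hk : k < n then
        if h0 : k = 0 then e.symm (w ⟨k, hk⟩)
        else ((hG ⟨k, hk⟩ h0 p).unit⁻¹ : Rˣ) * (w ⟨k, hk⟩ - eval p (F ⟨k, hk⟩))
      else 0
    let P : (k : ℕ) → (Fin k → R) := fun k =>
      Nat.rec (fun i => i.elim0) (fun k Pk => Fin.snoc Pk (val k Pk)) k
    have hstab : ∀ m k (hkm : k ≤ m) (j : Fin k), P m (Fin.castLE hkm j) = P k j := by
      intro m
      induction m with
      | zero =>
        intro k hkm j
        have hk0 : k = 0 := Nat.le_zero.mp hkm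
        subst hk0
        exact j.elim0
      | succ m ihm =>
        intro k hkm j
        rcases Nat.lt_or_ge k (m+1) with hlt | hge
        · have hkm' : k ≤ m := by omega
          have hc : Fin.castLE hkm j = Fin.castSucc (Fin.castLE hkm' j) := rfl
          rw [hc]
          have hPs : P (m + 1) = Fin.snoc (P m) (val m (P m)) := rfl
          rw [hPs, Fin.snoc_castSucc]
          exact ihm k hkm' j
        · have hk : k = m + 1 := le_antisymm hkm hge
          subst hk
          have : Fin.castLE hkm j = j := by ext; simp
          rw [this]
    have hvi : ∀ i : Fin n, P n i = val i.val (P i.val) := by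
      intro i
      have h1 : (i : Fin n) = Fin.castLE i.isLt (Fin.last i.val) := by ext; simp
      conv_lhs => rw [h1]
      rw [hstab n (i.val + 1) i.isLt (Fin.last i.val)]
      have hPs : P (i.val + 1) = Fin.snoc (P i.val) (val i.val (P i.val)) := rfl
      rw [hPs, Fin.snoc_last]
    have hpre : ∀ i : Fin n, ∀ j : Fin i.val,
        P n (Fin.castLE i.isLt.le j) = P i.val j := fun i j => hstab n i.val i.isLt.le j
    refine ⟨P n, ?_⟩
    funext i
    dsimp only
    have hPi := hvi i
    by_cases h0 : i.val = 0
    · rw [if_pos h0]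
      have hk0 : (0 : ℕ) < n := by omega
      have hval : val i.val (P i.val) = e.symm (w ⟨i.val, i.isLt⟩) := by
        simp only [val]
        rw [dif_pos i.isLt, dif_pos h0]
      rw [hPi, hval]
      have : (⟨i.val, i.isLt⟩ : Fin n) = i := by ext; rfl
      rw [this]
      exact e.apply_symm_apply (w i)
    · rw [if_neg h0]
      have heqp : (fun j : Fin i.val => P n (Fin.castLE i.isLt.le j)) = P i.val := by
        funext j; exact hpre i j
      have hu := hG ⟨i.val, i.isLt⟩ h0 (P i.val)
      have hval : val i.val (P i.val) =
          (hu.unit⁻¹ : Rˣ) * (w ⟨i.val, i.isLt⟩ - eval (P i.val) (F ⟨i.val, i.isLt⟩)) := by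
        simp only [val]
        rw [dif_pos i.isLt, dif_neg h0]
      rw [heqp, hPi, hval]
      show eval (P i.val) (F i) +
        ((hu.unit⁻¹ : Rˣ) : R) * (w i - eval (P i.val) (F i)) * eval (P i.val) (G i) = w i
      have hug : eval (P i.val) (G i) * ((hu.unit⁻¹ : Rˣ) : R) = 1 := by
        have h2 := hu.unit.mul_inv
        rwa [IsUnit.unit_spec] at h2
      linear_combination (w i - eval (P i.val) (F i)) * hug
end

section
/- Let R be a commutative ring and n > 1. The set MT_n of vector-polynomials of the form (f_1, f_2 + x_2 g_2, ..., f_n + x_n g_n), where f_1 ∈ R[x_1] is a permutation polynomial on R, f_i ∈ R[x_1,...,x_{i-1}], and g_i ∈ R[x_1,...,x_{i-1}] is unit-valued on R, is closed under composition of vector-polynomials and contains the identity (x_1,...,x_n); hence MT_n is a monoid under composition. -/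
open MvPolynomial

/-- The set `MT_n` of triangular vector-permutation polynomials: component `0` is a
one-variable permutation polynomial, and component `i ≠ 0` has the form
`f_i + x_i·g_i` with `f_i, g_i` polynomials in the variables `x_0,…,x_{i-1}` and
`g_i` unit-valued on `R`. -/
def MT (R : Type*) [CommRing R] (n : ℕ) : Set (Fin n → MvPolynomial (Fin n) R) :=
  {p | ∀ i : Fin n,
    (i.val = 0 → ∃ h : Polynomial R, Function.Bijective (fun a : R => h.eval a) ∧
      p i = Polynomial.aeval (X i : MvPolynomial (Fin n) R) h) ∧
    (i.val ≠ 0 → ∃ f g : MvPolynomial (Fin i.val) R,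
      (∀ v : Fin i.val → R, IsUnit (eval v g)) ∧
      p i = rename (Fin.castLE i.isLt.le) f + X i * rename (Fin.castLE i.isLt.le) g)}

/-- Composition of vector-polynomials: `(p ∘ q) i = p_i(q_1,…,q_n)`. -/
noncomputable def vcomp {R : Type*} [CommRing R] {n : ℕ} (p q : Fin n → MvPolynomial (Fin n) R) :
    Fin n → MvPolynomial (Fin n) R :=
  fun i => bind₁ q (p i)

/-
Substituting `q` into `f_i + x_i g_i` gives `f_i(q) + (f'_i + x_i g'_i) g_i(q)`. Since `q_j` for
`j < i` only involves `x_0, …, x_{i-1}`, this is again of the form `F + x_i G`, with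
`G = g'_i · g_i(q)` unit-valued as a product of unit values. The first components compose as
one-variable permutation polynomials.
-/

theorem Polynomial.bijective_eval_comp {R : Type*} [CommSemiring R] {p q : Polynomial R}
    (hp : Function.Bijective fun a : R => p.eval a)
    (hq : Function.Bijective fun a : R => q.eval a) :
    Function.Bijective fun a : R => (p.comp q).eval a := by
  simp only [Polynomial.eval_comp]
  exact hp.comp hq

namespace MvPolynomial

variable {R : Type*} [CommSemiring R]

theorem eval_bind₁ {σ τ : Type*} (v : τ → R) (g : σ → MvPolynomial τ R)
    (φ : MvPolynomial σ R) : eval v (bind₁ g φ) = eval (fun j => eval v (g j)) φ :=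
  eval₂Hom_bind₁ _ _ _ _

theorem bind₁_rename_eq_rename_bind₁ {σ τ υ υ' : Type*} {f : τ → σ}
    {g : σ → MvPolynomial υ R} {g' : τ → MvPolynomial υ' R} {e : υ' → υ}
    (h : ∀ j, rename e (g' j) = g (f j)) (φ : MvPolynomial τ R) :
    bind₁ g (rename f φ) = rename e (bind₁ g' φ) := by
  rw [bind₁_rename, rename_bind₁]
  congr
  funext j
  exact (h j).symm

end MvPolynomial

namespace MT

variable {R : Type*} [CommRing R] {n : ℕ}

theorem id_mem : (fun i : Fin n => (X i : MvPolynomial (Fin n) R)) ∈ MT R n := fun _ =>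
  ⟨fun _ => ⟨Polynomial.X, by simp only [Polynomial.eval_X]; exact Function.bijective_id, by simp⟩,
    fun _ => ⟨0, 1, fun _ => by simp, by simp⟩⟩

theorem exists_rename_castLE_eq {q : Fin n → MvPolynomial (Fin n) R} (hq : q ∈ MT R n)
    {m : ℕ} (hm : m ≤ n) (j : Fin m) :
    ∃ r : MvPolynomial (Fin m) R, rename (Fin.castLE hm) r = q (Fin.castLE hm j) := by
  by_cases hj : j.val = 0
  · obtain ⟨h, -, hqj⟩ := (hq (Fin.castLE hm j)).1 hj
    refine ⟨Polynomial.aeval (X j) h, ?_⟩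
    rw [hqj, ← Polynomial.aeval_algHom_apply, rename_X]
  · obtain ⟨f, g, -, hqj⟩ := (hq (Fin.castLE hm j)).2 hj
    refine ⟨rename (Fin.castLE j.isLt.le) f + X j * rename (Fin.castLE j.isLt.le) g, ?_⟩
    simp only [hqj, map_add, map_mul, rename_X, rename_rename]
    rfl

variable {p q : Fin n → MvPolynomial (Fin n) R}

theorem vcomp_apply_of_val_eq_zero (hp : p ∈ MT R n) (hq : q ∈ MT R n) {i : Fin n}
    (hi : i.val = 0) : ∃ h : Polynomial R, Function.Bijective (fun a : R => h.eval a) ∧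
      vcomp p q i = Polynomial.aeval (X i : MvPolynomial (Fin n) R) h := by
  obtain ⟨hp₀, hp₀_bij, hpi⟩ := (hp i).1 hi
  obtain ⟨hq₀, hq₀_bij, hqi⟩ := (hq i).1 hi
  refine ⟨hp₀.comp hq₀, Polynomial.bijective_eval_comp hp₀_bij hq₀_bij, ?_⟩
  rw [vcomp, hpi, Polynomial.aeval_comp, ← Polynomial.aeval_algHom_apply, bind₁_X_right, hqi]

theorem vcomp_apply_of_val_ne_zero (hp : p ∈ MT R n) (hq : q ∈ MT R n) {i : Fin n}
    (hi : i.val ≠ 0) : ∃ f g : MvPolynomial (Fin i.val) R,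
      (∀ v : Fin i.val → R, IsUnit (eval v g)) ∧
      vcomp p q i = rename (Fin.castLE i.isLt.le) f + X i * rename (Fin.castLE i.isLt.le) g := by
  obtain ⟨f, g, hg, hpi⟩ := (hp i).2 hi
  obtain ⟨f', g', hg', hqi⟩ := (hq i).2 hi
  choose q' hq' using exists_rename_castLE_eq hq i.isLt.le
  refine ⟨bind₁ q' f + f' * bind₁ q' g, g' * bind₁ q' g, fun v => ?_, ?_⟩
  · rw [map_mul, eval_bind₁]
    exact (hg' v).mul (hg _)
  · rw [vcomp, hpi, map_add, map_mul, bind₁_X_right, hqi,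
      bind₁_rename_eq_rename_bind₁ hq', bind₁_rename_eq_rename_bind₁ hq']
    simp only [map_add, map_mul]
    ring

theorem vcomp_mem (hp : p ∈ MT R n) (hq : q ∈ MT R n) : vcomp p q ∈ MT R n := fun _ =>
  ⟨vcomp_apply_of_val_eq_zero hp hq, vcomp_apply_of_val_ne_zero hp hq⟩

end MT

theorem MT_isMonoid_general (R : Type*) [CommRing R] (n : ℕ) :
    ((fun i : Fin n => (X i : MvPolynomial (Fin n) R)) ∈ MT R n) ∧
    (∀ p q : Fin n → MvPolynomial (Fin n) R,
      p ∈ MT R n → q ∈ MT R n → vcomp p q ∈ MT R n) :=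
  ⟨MT.id_mem, fun _ _ => MT.vcomp_mem⟩

/-- `MT_n` contains the identity `(x_1,…,x_n)` and is closed under
composition of vector-polynomials, hence is a monoid under composition. -/
theorem MT_isMonoid (R : Type*) [CommRing R] (n : ℕ) (hn : 1 < n) :
    ((fun i : Fin n => (X i : MvPolynomial (Fin n) R)) ∈ MT R n) ∧
    (∀ p q : Fin n → MvPolynomial (Fin n) R,
      p ∈ MT R n → q ∈ MT R n → vcomp p q ∈ MT R n) :=
  MT_isMonoid_general R n
end

section
/- Let R be a finite commutative ring, k > 1, and f, g ∈ R[x_1,...,x_k] with f unit-valued on R. Then the polynomial g(x_1,...,x_k) + x_{k+1} f(x_1,...,x_k), viewed as a polynomial in i variables for any i ≥ k+1, is a permutation polynomial, i.e., it occurs as a component of some vector-polynomial inducing a bijection of R^i. -/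
open MvPolynomial

/-- Over a finite commutative ring, if `f ∈ R[x_1,…,x_k]` is
unit-valued and `g ∈ R[x_1,…,x_k]`, then for every `i ≥ k+1` the polynomial
`g + x_{k+1}·f`, viewed in `i` variables, is a permutation polynomial: it occurs as a
component of a vector-polynomial inducing a bijection of `R^i`.  (0-based indexing:
`x_{k+1}` is the variable of index `k`.) -/
theorem add_lastVar_mul_unitValued_is_permutation_poly
    (R : Type*) [CommRing R] [Fintype R] (k : ℕ) (hk : 1 < k)
    (f g : MvPolynomial (Fin k) R)
    (hf : ∀ v : Fin k → R, IsUnit (eval v f))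
    (i : ℕ) (hi : k + 1 ≤ i) :
    ∃ p : Fin i → MvPolynomial (Fin i) R,
      Function.Bijective (fun (v : Fin i → R) (j : Fin i) => eval v (p j)) ∧
      ∃ j : Fin i, p j =
        rename (Fin.castLE (show k ≤ i by omega)) g
          + X ⟨k, by omega⟩ * rename (Fin.castLE (show k ≤ i by omega)) f := by
  have hki : k ≤ i := by omega
  set jk : Fin i := ⟨k, by omega⟩
  set G := rename (Fin.castLE hki) g
  set F := rename (Fin.castLE hki) f
  refine ⟨fun j => if j = jk then G + X jk * F else X j, ?_, jk, by simp⟩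
  have heval : ∀ v : Fin i → R, eval v F = eval (v ∘ Fin.castLE hki) f := by
    intro v; simp [F, eval_rename]
  have hevalG : ∀ v : Fin i → R, eval v G = eval (v ∘ Fin.castLE hki) g := by
    intro v; simp [G, eval_rename]
  rw [← Finite.injective_iff_bijective]
  intro v w h
  have hne : ∀ j : Fin i, j ≠ jk → v j = w j := by
    intro j hj
    have := congrFun h j
    simpa [hj] using this
  have hcomp : v ∘ Fin.castLE hki = w ∘ Fin.castLE hki := by
    funext x
    apply hne
    simp only [jk, Fin.ne_iff_vne, Fin.coe_castLE]
    exact Nat.ne_of_lt x.isLt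
  have hk' : v jk = w jk := by
    have := congrFun h jk
    simp only [if_pos rfl, if_true, eval_add, eval_mul, eval_X] at this
    rw [heval, heval, hevalG, hevalG, hcomp] at this
    have hu := hf (w ∘ Fin.castLE hki)
    have : v jk * eval (w ∘ Fin.castLE hki) f = w jk * eval (w ∘ Fin.castLE hki) f :=
      add_left_cancel this
    exact hu.mul_right_cancel this
  funext j
  by_cases hj : j = jk
  · subst hj; exact hk'
  · exact hne j hj
end

section
/- Let R be a commutative ring and n > 1. An element of the triangular monoid MT_n, written as (f_1, f_2 + x_2 u_2, ..., f_n + x_n u_n) with f_1 a permutation polynomial on R, f_i ∈ R[x_1,...,x_{i-1}], and u_i unit-valued on R, is invertible in MT_n if and only if f_1 is an R-automorphism of R[x_1] and each u_i is a unit of the polynomial ring R[x_1,...,x_{i-1}]. -/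
open MvPolynomial

/-! Write `p = (h(x₀), Fᵢ + xᵢ Gᵢ)`. If `q ∈ MT` is a two-sided inverse, its first component
`h'(x₀)` gives `h ∘ h' = h' ∘ h = X`, and differentiating `qᵢ(p) = xᵢ` in `xᵢ` shows that
`Gᵢ` divides `1`, because nothing else in `qᵢ(p)` involves `xᵢ`. Conversely the recursion
`qᵢ = (xᵢ - Fᵢ(q)) Gᵢ⁻¹(q)`, with `q₀ = h'(x₀)`, solves `p(q) = x` outright and `q(p) = x` by
induction on `i`; as `q₀, …, qᵢ₋₁` only involve `x₀, …, xᵢ₋₁`, the map `q` is triangular of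
the same shape, with unit coefficients `Gᵢ⁻¹(q)`, so it lies in `MT`. -/

section General

variable {R : Type*} [CommRing R] {σ τ : Type*}

theorem aeval_mem_of_forall_mem {A : Type*} [CommRing A] [Algebra R A] {S : Subalgebra R A}
    {v : τ → A} (hv : ∀ j, v j ∈ S) (f : MvPolynomial τ R) : aeval v f ∈ S := by
  have hf : aeval v f ∈ (aeval (R := R) v).range := ⟨f, rfl⟩
  rw [aeval_range] at hf
  exact Algebra.adjoin_le (Set.range_subset_iff.2 hv) hf

theorem X_mem_supported_of_mem {s : Set σ} {k : σ} (hk : k ∈ s) :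
    (X k : MvPolynomial σ R) ∈ supported R s :=
  Algebra.subset_adjoin (Set.mem_image_of_mem X hk)

theorem rename_mem_supported_range (f : τ → σ) (z : MvPolynomial τ R) :
    rename f z ∈ supported R (Set.range f) := by
  rw [rename_eq_aeval]
  exact aeval_mem_of_forall_mem (fun j => X_mem_supported_of_mem (Set.mem_range_self j)) z

theorem bind₁_mem_supported {p : σ → MvPolynomial τ R} {s : Set σ} {t : Set τ}
    (hp : ∀ k ∈ s, p k ∈ supported R t) {c : MvPolynomial σ R} (hc : c ∈ supported R s) :
    bind₁ p c ∈ supported R t := by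
  rw [supported_eq_range_rename] at hc
  obtain ⟨c, rfl⟩ := (AlgHom.mem_range _).mp hc
  rw [bind₁_rename]
  exact aeval_mem_of_forall_mem (fun k : s => hp k k.2) c

theorem bind₁_bind₁_eq_self_of_mem_supported {p q : σ → MvPolynomial σ R} {s : Set σ}
    (hpq : ∀ j ∈ s, bind₁ p (q j) = X j) {c : MvPolynomial σ R} (hc : c ∈ supported R s) :
    bind₁ p (bind₁ q c) = c := by
  have hle : supported R s ≤ AlgHom.equalizer ((bind₁ p).comp (bind₁ q)) (AlgHom.id R _) :=
    Algebra.adjoin_le (by rintro _ ⟨j, hj, rfl⟩; simpa using hpq j hj)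
  exact hle hc

theorem pderiv_eq_zero_of_mem_supported {s : Set σ} {i : σ} (hi : i ∉ s)
    {z : MvPolynomial σ R} (hz : z ∈ supported R s) : pderiv i z = 0 :=
  pderiv_eq_zero_of_notMem_vars fun h => hi (mem_supported.mp hz h)

theorem isUnit_of_isUnit_rename {f : τ → σ} (hf : f.Injective) {z : MvPolynomial τ R}
    (hz : IsUnit (rename f z)) : IsUnit z := by
  simpa only [killCompl_rename_app] using hz.map (killCompl hf)

/-- Differentiate `(c + xᵢ d)(p) = xᵢ` in `xᵢ`: only `pᵢ = a + xᵢ b` involves `xᵢ`, which leaves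
`b * d(p) = 1`. -/
theorem isUnit_of_bind₁_eq_X {p : σ → MvPolynomial σ R} {s : Set σ} {i : σ} (hi : i ∉ s)
    (hp : ∀ k ∈ s, p k ∈ supported R s) {a b c d : MvPolynomial σ R}
    (ha : a ∈ supported R s) (hb : b ∈ supported R s) (hc : c ∈ supported R s)
    (hd : d ∈ supported R s) (hpi : p i = a + X i * b) (h : bind₁ p (c + X i * d) = X i) :
    IsUnit b := by
  have hc' := pderiv_eq_zero_of_mem_supported hi (bind₁_mem_supported hp hc)
  have hd' := pderiv_eq_zero_of_mem_supported hi (bind₁_mem_supported hp hd)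
  have := congrArg (pderiv i) h
  simp only [map_add, map_mul, bind₁_X_right, hpi, Derivation.leibniz, pderiv_X_self,
    pderiv_eq_zero_of_mem_supported hi ha, pderiv_eq_zero_of_mem_supported hi hb, hc', hd',
    smul_eq_mul] at this
  exact IsUnit.of_mul_eq_one (bind₁ p d) (by linear_combination this)

theorem comp_eq_X_of_bind₁_eq_X {q : σ → MvPolynomial σ R} {i : σ} {f g : Polynomial R}
    (hq : q i = Polynomial.aeval (X i) g) (h : bind₁ q (Polynomial.aeval (X i) f) = X i) :
    f.comp g = Polynomial.X := by
  rw [← Polynomial.aeval_algHom_apply, bind₁_X_right, hq, ← Polynomial.aeval_comp] at h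
  have h' := congrArg (aeval fun _ : σ => (Polynomial.X : Polynomial R)) h
  simpa [← Polynomial.aeval_algHom_apply] using h'

theorem polynomial_aeval_X_mem_supported {s : Set σ} {k : σ} (hk : k ∈ s) (f : Polynomial R) :
    Polynomial.aeval (X k) f ∈ supported R s :=
  Algebra.adjoin_mono (Set.singleton_subset_iff.2 (Set.mem_image_of_mem X hk))
    (Polynomial.aeval_mem_adjoin_singleton R (X k))

theorem bijective_eval_of_comp_eq_X {f g : Polynomial R} (hfg : f.comp g = Polynomial.X)
    (hgf : g.comp f = Polynomial.X) : Function.Bijective fun a : R => g.eval a := by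
  refine Function.bijective_iff_has_inverse.2 ⟨fun a => f.eval a, fun a => ?_, fun a => ?_⟩
  · simp only [← Polynomial.eval_comp, hfg, Polynomial.eval_X]
  · simp only [← Polynomial.eval_comp, hgf, Polynomial.eval_X]

end General

section Triangular

variable {R : Type*} [CommRing R] {n : ℕ}

theorem rename_castLE_mem_supported (i : Fin n) (z : MvPolynomial (Fin i.val) R) :
    rename (Fin.castLE i.isLt.le) z ∈ supported R (Set.Iio i) := by
  have hz := rename_mem_supported_range (Fin.castLE i.isLt.le) z
  rwa [Fin.range_castLE] at hz

theorem exists_rename_castLE_eq {i : Fin n} {z : MvPolynomial (Fin n) R}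
    (hz : z ∈ supported R (Set.Iio i)) :
    ∃ w : MvPolynomial (Fin i.val) R, rename (Fin.castLE i.isLt.le) w = z :=
  exists_rename_eq_of_vars_subset_range z _ (Fin.castLE_injective _)
    (by rw [Fin.range_castLE]; exact mem_supported.mp hz)

noncomputable def triangularMap (h : Polynomial R)
    (F G : (i : Fin n) → MvPolynomial (Fin i.val) R) : Fin n → MvPolynomial (Fin n) R := fun i =>
  if i.val = 0 then Polynomial.aeval (X i : MvPolynomial (Fin n) R) h
  else rename (Fin.castLE i.isLt.le) (F i) + X i * rename (Fin.castLE i.isLt.le) (G i)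

variable {h g : Polynomial R} {F G U : (i : Fin n) → MvPolynomial (Fin i.val) R} {i : Fin n}

theorem triangularMap_of_val_eq_zero (hi : i.val = 0) :
    triangularMap h F G i = Polynomial.aeval (X i) h :=
  if_pos hi

theorem triangularMap_of_val_ne_zero (hi : i.val ≠ 0) :
    triangularMap h F G i =
      rename (Fin.castLE i.isLt.le) (F i) + X i * rename (Fin.castLE i.isLt.le) (G i) :=
  if_neg hi

theorem triangularMap_mem_supported (k : Fin n) :
    triangularMap h F G k ∈ supported R (Set.Iic k) := by
  by_cases hk : k.val = 0
  · rw [triangularMap_of_val_eq_zero hk]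
    exact polynomial_aeval_X_mem_supported Set.self_mem_Iic h
  · rw [triangularMap_of_val_ne_zero hk]
    have hlow := supported_mono (R := R) (Set.Iio_subset_Iic_self (a := k))
    exact add_mem (hlow (rename_castLE_mem_supported k _))
      (mul_mem (X_mem_supported_of_mem Set.self_mem_Iic) (hlow (rename_castLE_mem_supported k _)))

theorem isUnit_of_bind₁_triangularMap_eq_X (hi : i.val ≠ 0) {f g : MvPolynomial (Fin i.val) R}
    (hfg : bind₁ (triangularMap h F G)
      (rename (Fin.castLE i.isLt.le) f + X i * rename (Fin.castLE i.isLt.le) g) = X i) :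
    IsUnit (G i) :=
  isUnit_of_isUnit_rename (Fin.castLE_injective _) <|
    isUnit_of_bind₁_eq_X (s := Set.Iio i) (lt_irrefl i)
      (fun k hk => supported_mono (Set.Iic_subset_Iio.2 hk) (triangularMap_mem_supported k))
      (rename_castLE_mem_supported i _) (rename_castLE_mem_supported i _)
      (rename_castLE_mem_supported i _) (rename_castLE_mem_supported i _)
      (triangularMap_of_val_ne_zero hi) hfg

/-- With `U i = (G i)⁻¹`, the `i`-th component solves `Fᵢ(q) + qᵢ Gᵢ(q) = xᵢ` for `qᵢ`. -/
noncomputable def triangularInv (g : Polynomial R)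
    (F U : (i : Fin n) → MvPolynomial (Fin i.val) R) : Fin n → MvPolynomial (Fin n) R
  | i =>
    if i.val = 0 then Polynomial.aeval (X i : MvPolynomial (Fin n) R) g
    else (X i - bind₁ (fun j : Fin i.val => triangularInv g F U (Fin.castLE i.isLt.le j)) (F i)) *
      bind₁ (fun j : Fin i.val => triangularInv g F U (Fin.castLE i.isLt.le j)) (U i)
  termination_by i => i.val
  decreasing_by all_goals exact j.isLt

theorem triangularInv_of_val_eq_zero (hi : i.val = 0) :
    triangularInv g F U i = Polynomial.aeval (X i) g := by
  rw [triangularInv, if_pos hi]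

theorem triangularInv_of_val_ne_zero (hi : i.val ≠ 0) :
    triangularInv g F U i =
      (X i - bind₁ (triangularInv g F U) (rename (Fin.castLE i.isLt.le) (F i))) *
        bind₁ (triangularInv g F U) (rename (Fin.castLE i.isLt.le) (U i)) := by
  rw [triangularInv, if_neg hi, bind₁_rename, bind₁_rename]
  rfl

theorem triangularInv_mem_supported (k : Fin n) :
    triangularInv g F U k ∈ supported R (Set.Iic k) := by
  induction k using WellFoundedLT.induction with
  | _ k ih =>
    by_cases hk : k.val = 0
    · rw [triangularInv_of_val_eq_zero hk]
      exact polynomial_aeval_X_mem_supported Set.self_mem_Iic g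
    · rw [triangularInv_of_val_ne_zero hk]
      have hlow : ∀ j ∈ Set.Iio k, triangularInv g F U j ∈ supported R (Set.Iic k) :=
        fun j hj => supported_mono (Set.Iic_subset_Iic.2 (le_of_lt hj)) (ih j hj)
      exact mul_mem (sub_mem (X_mem_supported_of_mem Set.self_mem_Iic)
        (bind₁_mem_supported hlow (rename_castLE_mem_supported k _)))
        (bind₁_mem_supported hlow (rename_castLE_mem_supported k _))

theorem triangularInv_mem_MT (hg : Function.Bijective fun a : R => g.eval a)
    (hU : ∀ i : Fin n, i.val ≠ 0 → IsUnit (U i)) : triangularInv g F U ∈ MT R n := by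
  refine fun i => ⟨fun hi => ⟨g, hg, triangularInv_of_val_eq_zero hi⟩, fun hi => ?_⟩
  have hlow : ∀ j ∈ Set.Iio i, triangularInv g F U j ∈ supported R (Set.Iio i) :=
    fun j hj => supported_mono (Set.Iic_subset_Iio.2 hj) (triangularInv_mem_supported j)
  obtain ⟨a, ha⟩ := exists_rename_castLE_eq
    (bind₁_mem_supported hlow (rename_castLE_mem_supported i (F i)))
  obtain ⟨b, hb⟩ := exists_rename_castLE_eq
    (bind₁_mem_supported hlow (rename_castLE_mem_supported i (U i)))
  have hbu : IsUnit b :=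
    isUnit_of_isUnit_rename (Fin.castLE_injective _) (hb ▸ ((hU i hi).map _).map _)
  refine ⟨-(a * b), b, fun v => hbu.map (eval v), ?_⟩
  rw [triangularInv_of_val_ne_zero hi, ← ha, ← hb, map_neg, map_mul]
  ring

theorem bind₁_triangularInv_triangularMap (hhg : h.comp g = Polynomial.X)
    (hGU : ∀ i : Fin n, i.val ≠ 0 → G i * U i = 1) (i : Fin n) :
    bind₁ (triangularInv g F U) (triangularMap h F G i) = X i := by
  by_cases hi : i.val = 0
  · rw [triangularMap_of_val_eq_zero hi, ← Polynomial.aeval_algHom_apply, bind₁_X_right,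
      triangularInv_of_val_eq_zero hi, ← Polynomial.aeval_comp, hhg, Polynomial.aeval_X]
  · have hGU' : bind₁ (triangularInv g F U) (rename (Fin.castLE i.isLt.le) (G i)) *
        bind₁ (triangularInv g F U) (rename (Fin.castLE i.isLt.le) (U i)) = 1 := by
      rw [← map_mul, ← map_mul, hGU i hi, map_one, map_one]
    rw [triangularMap_of_val_ne_zero hi, map_add, map_mul, bind₁_X_right,
      triangularInv_of_val_ne_zero hi]
    linear_combination
      (X i - bind₁ (triangularInv g F U) (rename (Fin.castLE i.isLt.le) (F i))) * hGU'

theorem bind₁_triangularMap_triangularInv (hgh : g.comp h = Polynomial.X)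
    (hGU : ∀ i : Fin n, i.val ≠ 0 → G i * U i = 1) (i : Fin n) :
    bind₁ (triangularMap h F G) (triangularInv g F U i) = X i := by
  induction i using WellFoundedLT.induction with
  | _ i ih =>
    by_cases hi : i.val = 0
    · rw [triangularInv_of_val_eq_zero hi, ← Polynomial.aeval_algHom_apply, bind₁_X_right,
        triangularMap_of_val_eq_zero hi, ← Polynomial.aeval_comp, hgh, Polynomial.aeval_X]
    · have hGU' :
          rename (Fin.castLE i.isLt.le) (G i) * rename (Fin.castLE i.isLt.le) (U i) = 1 := by
        rw [← map_mul, hGU i hi, map_one]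
      rw [triangularInv_of_val_ne_zero hi, map_mul, map_sub, bind₁_X_right,
        bind₁_bind₁_eq_self_of_mem_supported ih (rename_castLE_mem_supported i _),
        bind₁_bind₁_eq_self_of_mem_supported ih (rename_castLE_mem_supported i _),
        triangularMap_of_val_ne_zero hi]
      linear_combination X i * hGU'

end Triangular

theorem MT_unit_iff_general (R : Type*) [CommRing R] (n : ℕ) (hn : 1 < n)
    (h : Polynomial R)
    (F G : (i : Fin n) → MvPolynomial (Fin i.val) R)
    (p : Fin n → MvPolynomial (Fin n) R)
    (hp : p = fun i => if i.val = 0 then Polynomial.aeval (X i : MvPolynomial (Fin n) R) h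
      else rename (Fin.castLE i.isLt.le) (F i) + X i * rename (Fin.castLE i.isLt.le) (G i)) :
    (∃ q ∈ MT R n, vcomp p q = (fun i => X i) ∧ vcomp q p = (fun i => X i)) ↔
      ((∃ h' : Polynomial R, h.comp h' = Polynomial.X ∧ h'.comp h = Polynomial.X) ∧
        ∀ i : Fin n, i.val ≠ 0 → IsUnit (G i)) := by
  obtain rfl : p = triangularMap h F G := hp
  constructor
  · rintro ⟨q, hq, hpq, hqp⟩
    have hpq' : ∀ i, bind₁ q (triangularMap h F G i) = X i := congrFun hpq
    have hqp' : ∀ i, bind₁ (triangularMap h F G) (q i) = X i := congrFun hqp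
    let i₀ : Fin n := ⟨0, by omega⟩
    obtain ⟨g, -, hq₀⟩ := (hq i₀).1 rfl
    have hp₀ : triangularMap h F G i₀ = Polynomial.aeval (X i₀) h :=
      triangularMap_of_val_eq_zero rfl
    refine ⟨⟨g, comp_eq_X_of_bind₁_eq_X hq₀ (hp₀ ▸ hpq' i₀),
      comp_eq_X_of_bind₁_eq_X hp₀ (hq₀ ▸ hqp' i₀)⟩, fun i hi => ?_⟩
    obtain ⟨a, b, -, hqi⟩ := (hq i).2 hi
    exact isUnit_of_bind₁_triangularMap_eq_X hi (hqi ▸ hqp' i)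
  · rintro ⟨⟨g, hhg, hgh⟩, hG⟩
    have hGU : ∀ i : Fin n, i.val ≠ 0 → G i * Ring.inverse (G i) = 1 :=
      fun i hi => Ring.mul_inverse_cancel _ (hG i hi)
    exact ⟨triangularInv g F (fun i => Ring.inverse (G i)),
      triangularInv_mem_MT (bijective_eval_of_comp_eq_X hhg hgh) fun i hi => (hG i hi).ringInverse,
      funext (bind₁_triangularInv_triangularMap hhg hGU),
      funext (bind₁_triangularMap_triangularInv hgh hGU)⟩

/-- An element `(f₁, f₂ + x₂·u₂, …, f_n + x_n·u_n)` of the triangular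
monoid `MT_n` (first component a permutation polynomial `h`, `u_i` unit-valued) is
invertible in `MT_n` iff `h` is an `R`-automorphism of `R[x₁]` (it has a
compositional inverse) and each `u_i` is a unit of the polynomial ring
`R[x_1,…,x_{i-1}]`. -/
theorem MT_unit_iff (R : Type*) [CommRing R] (n : ℕ) (hn : 1 < n)
    (h : Polynomial R) (hperm : Function.Bijective fun a : R => h.eval a)
    (F G : (i : Fin n) → MvPolynomial (Fin i.val) R)
    (hG : ∀ i : Fin n, i.val ≠ 0 → ∀ v : Fin i.val → R, IsUnit (eval v (G i)))
    (p : Fin n → MvPolynomial (Fin n) R)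
    (hp : p = fun i => if i.val = 0 then Polynomial.aeval (X i : MvPolynomial (Fin n) R) h
      else rename (Fin.castLE i.isLt.le) (F i) + X i * rename (Fin.castLE i.isLt.le) (G i)) :
    (∃ q ∈ MT R n, vcomp p q = (fun i => X i) ∧ vcomp q p = (fun i => X i)) ↔
      ((∃ h' : Polynomial R, h.comp h' = Polynomial.X ∧ h'.comp h = Polynomial.X) ∧
        ∀ i : Fin n, i.val ≠ 0 → IsUnit (G i)) :=
  MT_unit_iff_general R n hn h F G p hp
end

section
/- Let R be a finite commutative local ring that is not a field, with maximal ideal M and residue field F_q, and let f ∈ R[x]. Then f induces a permutation of R if and only if (1) the reduction of f modulo M is a permutation polynomial on R/M and (2) for all a ∈ R, the formal derivative f'(a) is not in M. -/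
open Polynomial IsLocalRing

lemma eval_add_sq_aux {R : Type*} [CommRing R] (f : Polynomial R) (a m : R) :
    ∃ c : R, f.eval (a + m) = f.eval a + f.derivative.eval a * m + c * m ^ 2 := by
  refine ⟨((taylor a f).divX.divX).eval m, ?_⟩
  conv_lhs => rw [add_comm, ← taylor_eval a f, ← divX_mul_X_add (taylor a f),
    ← divX_mul_X_add (taylor a f).divX]
  simp only [eval_add, eval_mul, eval_C, eval_X, coeff_divX, taylor_coeff_zero,
    taylor_coeff_one, zero_add]
  ring

lemma exists_ann_aux (R : Type*) [CommRing R] [IsLocalRing R] [Fintype R]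
    (hR : ¬IsField R) :
    ∃ m : R, m ≠ 0 ∧ m ∈ maximalIdeal R ∧ ∀ x ∈ maximalIdeal R, m * x = 0 := by
  have hM : maximalIdeal R ≠ ⊥ := fun h => hR (isField_iff_maximalIdeal_eq.mpr h)
  have hnil : IsNilpotent (maximalIdeal R) := by
    rw [← jacobson_eq_maximalIdeal (⊥ : Ideal R) bot_ne_top]
    exact IsArtinianRing.isNilpotent_jacobson_bot
  have hex : ∃ n : ℕ, maximalIdeal R ^ n = ⊥ := hnil
  classical
  let n := Nat.find hex
  have hn : maximalIdeal R ^ n = ⊥ := Nat.find_spec hex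
  have hn0 : n ≠ 0 := by
    intro h
    rw [h, pow_zero, Ideal.one_eq_top] at hn
    exact one_ne_zero ((Submodule.eq_bot_iff _).mp hn 1 Submodule.mem_top)
  have hn1 : n ≠ 1 := by
    intro h
    rw [h, pow_one] at hn
    exact hM hn
  have hlt : n - 1 < n := Nat.sub_lt (Nat.pos_of_ne_zero hn0) one_pos
  have hne : maximalIdeal R ^ (n - 1) ≠ ⊥ := Nat.find_min hex hlt
  obtain ⟨m, hmmem, hm0⟩ := Submodule.exists_mem_ne_zero_of_ne_bot hne
  refine ⟨m, hm0, ?_, ?_⟩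
  · exact Ideal.pow_le_self (by omega) hmmem
  · intro x hx
    have : m * x ∈ maximalIdeal R ^ (n - 1) * maximalIdeal R :=
      Ideal.mul_mem_mul hmmem hx
    rw [← pow_succ, Nat.sub_add_cancel (Nat.one_le_iff_ne_zero.mpr hn0), hn] at this
    exact this

/-- Nöbauer's criterion. Let `R` be a finite local commutative ring
which is not a field, with maximal ideal `M`. A polynomial `f ∈ R[x]` induces a
permutation of `R` iff its reduction mod `M` is a permutation polynomial of the
residue field and `f'(a) ∉ M` for all `a ∈ R`. -/
theorem permutation_poly_iff_local (R : Type*) [CommRing R] [IsLocalRing R] [Fintype R]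
    (hR : ¬IsField R) (f : Polynomial R) :
    Function.Bijective (fun a : R => f.eval a) ↔
      (Function.Bijective (fun b : IsLocalRing.ResidueField R =>
          (f.map (IsLocalRing.residue R)).eval b) ∧
        ∀ a : R, f.derivative.eval a ∉ IsLocalRing.maximalIdeal R) := by
  have hres : Finite (ResidueField R) := Finite.of_surjective _ (residue_surjective (R := R))
  have keyeval : ∀ a : R, (f.map (residue R)).eval (residue R a) = residue R (f.eval a) := by
    intro a
    rw [eval_map, eval₂_at_apply]
  constructor
  · rintro ⟨hinj, hsurj⟩
    constructor
    · rw [← Finite.surjective_iff_bijective]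
      intro b
      obtain ⟨b', rfl⟩ := residue_surjective (R := R) b
      obtain ⟨a, ha⟩ := hsurj b'
      refine ⟨residue R a, ?_⟩
      show (f.map (residue R)).eval (residue R a) = residue R b'
      rw [keyeval]
      exact congrArg _ ha
    · intro a ha
      obtain ⟨m, hm0, hmM, hann⟩ := exists_ann_aux R hR
      obtain ⟨c, hc⟩ := eval_add_sq_aux f a m
      have h1 : f.derivative.eval a * m = 0 := by
        rw [mul_comm]; exact hann _ ha
      have h2 : c * m ^ 2 = 0 := by
        calc c * m ^ 2 = m * (c * m) := by ring
          _ = 0 := hann _ (Ideal.mul_mem_left _ c hmM)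
      have heq : f.eval (a + m) = f.eval a := by
        rw [hc, h1, h2, add_zero, add_zero]
      have := hinj heq
      exact hm0 (add_eq_left.mp this)
  · rintro ⟨hbar, hder⟩
    rw [← Finite.injective_iff_bijective]
    intro a b hab
    simp only at hab
    have hres_eq : residue R a = residue R b := by
      have h1 : (f.map (residue R)).eval (residue R a)
          = (f.map (residue R)).eval (residue R b) := by
        rw [keyeval, keyeval, hab]
      exact hbar.injective h1
    have hmM : b - a ∈ maximalIdeal R := by
      have : residue R (b - a) = 0 := by rw [map_sub, hres_eq, sub_self]
      exact (Ideal.Quotient.eq_zero_iff_mem).mp this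
    obtain ⟨c, hc⟩ := eval_add_sq_aux f a (b - a)
    rw [add_sub_cancel] at hc
    have hzero : (b - a) * (f.derivative.eval a + c * (b - a)) = 0 := by
      have : f.eval a + f.derivative.eval a * (b - a) + c * (b - a) ^ 2 = f.eval a := by
        rw [← hc, hab]
      ring_nf
      ring_nf at this
      linear_combination this
    have hunit : IsUnit (f.derivative.eval a + c * (b - a)) := by
      by_contra h
      have hmem : f.derivative.eval a + c * (b - a) ∈ maximalIdeal R :=
        (mem_maximalIdeal _).mpr h
      have : f.derivative.eval a ∈ maximalIdeal R := by
        have := Ideal.sub_mem _ hmem (Ideal.mul_mem_left _ c hmM)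
        simpa using this
      exact hder a this
    have : b - a = 0 := by
      obtain ⟨u, hu⟩ := hunit
      have := congrArg (fun x => x * (↑u⁻¹ : R)) hzero
      simp only [zero_mul, mul_assoc, ← hu, Units.mul_inv, mul_one] at this
      exact this
    exact (sub_eq_zero.mp this).symm
end

section
/- Let R be a finite commutative local ring that is not a field, with residue field F_q, and let g(x) = (x^q - x) + 1 ∈ R[x]. Then there is no unit u of the polynomial ring R[x] such that u and g induce the same function on R (although g is unit-valued on R). -/
/-!
Since `a ^ q = a` in the residue field, `g = X ^ q - X + 1` reduces to `1` there, so `g` is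
unit-valued. As `R` is not a field, its maximal ideal is nonzero and nilpotent, so it contains
some `t ≠ 0` with `t ^ 2 = 0`. Then `g(t) = 1 - t`, while a polynomial `u` satisfies
`u(t) = u(0) + u'(0) t`; if `u` is a unit, `u'(0)` is nilpotent, so `u(t) = u(0) - t` would force
`(1 + u'(0)) t = 0` with `1 + u'(0)` a unit, i.e. `t = 0`.
-/

open IsLocalRing Polynomial

lemma IsNilpotent.exists_ne_zero_sq_eq_zero {M : Type*} [MonoidWithZero M] {m : M}
    (hm : IsNilpotent m) (hm0 : m ≠ 0) : ∃ t : M, t ≠ 0 ∧ t ^ 2 = 0 := by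
  have : Nontrivial M := ⟨⟨m, 0, hm0⟩⟩
  have hk : 2 ≤ nilpotencyClass m := by
    have hpos : 0 < nilpotencyClass m := pos_nilpotencyClass_iff.mpr hm
    have hne : nilpotencyClass m ≠ 1 := mt nilpotencyClass_eq_one.mp hm0
    omega
  refine ⟨m ^ (nilpotencyClass m - 1), pow_pred_nilpotencyClass hm, ?_⟩
  rw [← pow_mul]
  exact pow_eq_zero_of_le (by omega) (pow_nilpotencyClass hm)

lemma IsLocalRing.exists_ne_zero_sq_eq_zero {R : Type*} [CommRing R] [IsLocalRing R]
    [IsArtinianRing R] (hR : ¬IsField R) : ∃ t : R, t ≠ 0 ∧ t ^ 2 = 0 := by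
  obtain ⟨m, hm, hm0⟩ := Submodule.exists_mem_ne_zero_of_ne_bot
    (mt isField_iff_maximalIdeal_eq.mpr hR)
  exact (Ring.KrullDimLE.isNilpotent_iff_mem_maximalIdeal.mpr hm).exists_ne_zero_sq_eq_zero hm0

lemma Polynomial.eq_zero_of_isUnit_of_eval_eq_eval_zero_sub {R : Type*} [CommRing R]
    {u : R[X]} (hu : IsUnit u) {t : R} (ht : t ^ 2 = 0) (h : u.eval t = u.eval 0 - t) :
    t = 0 := by
  have hu' : IsUnit (1 + u.derivative.eval 0) := by
    rw [← coeff_zero_eq_eval_zero, coeff_derivative, Nat.cast_zero, zero_add, zero_add, mul_one]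
    exact ((isUnit_iff_coeff_isUnit_isNilpotent.mp hu).2 1 one_ne_zero).isUnit_one_add
  refine hu'.mul_right_eq_zero.mp ?_
  have := eval_add_of_sq_eq_zero u 0 t ht
  rw [zero_add, h] at this
  linear_combination -this

lemma Polynomial.eval_X_pow_sub_X_add_one_of_sq_eq_zero {R : Type*} [CommRing R] {q : ℕ}
    (hq : 2 ≤ q) {t : R} (ht : t ^ 2 = 0) : (X ^ q - X + 1 : R[X]).eval t = 1 - t := by
  simp [pow_eq_zero_of_le hq ht, sub_add_eq_add_sub]

lemma IsLocalRing.isUnit_eval_X_pow_card_sub_X_add_one {R : Type*} [CommRing R] [IsLocalRing R]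
    [Fintype (ResidueField R)] (a : R) :
    IsUnit ((X ^ Fintype.card (ResidueField R) - X + 1 : R[X]).eval a) := by
  refine isUnit_of_map_unit (residue R) _ ?_
  simp [FiniteField.pow_card]

/-- Let `R` be a finite local commutative ring that is not a field,
with residue field of cardinality `q`. Then no unit `u` of the polynomial ring `R[x]`
induces the same function on `R` as `g(x) = (x^q - x) + 1` (although `g` is
unit-valued on `R`). -/
theorem no_unit_poly_represents (R : Type*) [CommRing R] [IsLocalRing R] [Fintype R]
    (hR : ¬IsField R) (q : ℕ) (hq : q = Nat.card (IsLocalRing.ResidueField R)) :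
    ((∀ a : R, IsUnit ((Polynomial.X ^ q - Polynomial.X + 1 : Polynomial R).eval a)) ∧
      ¬∃ u : Polynomial R, IsUnit u ∧
        ∀ a : R, u.eval a = (Polynomial.X ^ q - Polynomial.X + 1 : Polynomial R).eval a) := by
  have : Finite (ResidueField R) := Quotient.finite _
  have : Fintype (ResidueField R) := Fintype.ofFinite _
  rw [Nat.card_eq_fintype_card] at hq
  subst hq
  refine ⟨isUnit_eval_X_pow_card_sub_X_add_one, ?_⟩
  rintro ⟨u, hu, hug⟩
  obtain ⟨t, ht0, ht⟩ := exists_ne_zero_sq_eq_zero hR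
  have hq : 2 ≤ Fintype.card (ResidueField R) := Fintype.one_lt_card
  refine ht0 (eq_zero_of_isUnit_of_eval_eq_eval_zero_sub hu ht ?_)
  rw [hug, hug, eval_X_pow_sub_X_add_one_of_sq_eq_zero hq ht,
    eval_X_pow_sub_X_add_one_of_sq_eq_zero hq (zero_pow two_ne_zero), sub_zero]
end

section
/- Let R be a commutative ring and n > 1. The triangular monoid MT_n is isomorphic to the semidirect product ML^n_n ⋊ MT_{n-1}, where ML^n_n is the monoid of vector-polynomials (x_1,...,x_{n-1}, f + x_n u) with f ∈ R[x_1,...,x_{n-1}] and u unit-valued, and MT_{n-1} acts on ML^n_n by substitution: (n:u;f) ↦ (n: u(h_1,...,h_{n-1}); f(h_1,...,h_{n-1})) for (h_1,...,h_{n-1}) ∈ MT_{n-1}. -/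
open MvPolynomial

/-- The pairing `ψ(h⃗, (n:u;f)) = (h_1,…,h_{n-1}, f + u·x_n)` of an element of
`MT_{n-1}` with data `(u, f)` for the last coordinate. -/
noncomputable def pairUp {R : Type*} [CommRing R] {m : ℕ}
    (h : Fin m → MvPolynomial (Fin m) R) (u f : MvPolynomial (Fin m) R) :
    Fin (m + 1) → MvPolynomial (Fin (m + 1)) R :=
  fun i => if hlt : i.val < m then rename Fin.castSucc (h ⟨i.val, hlt⟩)
    else rename Fin.castSucc f + X i * rename Fin.castSucc u


section helpers
variable {R : Type*} [CommRing R] {m : ℕ}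

lemma pairUp_lt (h : Fin m → MvPolynomial (Fin m) R) (u f : MvPolynomial (Fin m) R)
    (i : Fin (m+1)) (hlt : i.val < m) :
    pairUp h u f i = rename Fin.castSucc (h ⟨i.val, hlt⟩) := dif_pos hlt

lemma pairUp_ge (h : Fin m → MvPolynomial (Fin m) R) (u f : MvPolynomial (Fin m) R)
    (i : Fin (m+1)) (hlt : ¬ i.val < m) :
    pairUp h u f i = rename Fin.castSucc f + X i * rename Fin.castSucc u := dif_neg hlt

lemma bind₁_pairUp_rename (l : Fin m → MvPolynomial (Fin m) R) (v g a : MvPolynomial (Fin m) R) :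
    bind₁ (pairUp l v g) (rename Fin.castSucc a) = rename Fin.castSucc (bind₁ l a) := by
  rw [bind₁_rename, rename_bind₁]
  have : (pairUp l v g ∘ Fin.castSucc) = fun j => rename Fin.castSucc (l j) := by
    funext j; simp [Function.comp, pairUp, j.isLt]
  rw [this]

noncomputable def splitA : MvPolynomial (Fin (m+1)) R →ₐ[R] Polynomial (MvPolynomial (Fin m) R) :=
  aeval fun i => if h : i.val < m then Polynomial.C (X ⟨i.val, h⟩) else Polynomial.X

lemma splitA_rename (a : MvPolynomial (Fin m) R) :
    splitA (rename Fin.castSucc a) = Polynomial.C a := by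
  rw [splitA, aeval_rename]
  have : ((fun i : Fin (m+1) => if h : i.val < m then (Polynomial.C (X (⟨i.val, h⟩ : Fin m)) : Polynomial (MvPolynomial (Fin m) R)) else (Polynomial.X : Polynomial (MvPolynomial (Fin m) R))) ∘ Fin.castSucc) = fun j : Fin m => Polynomial.C (X j) := by
    funext j; simp [Function.comp, j.isLt]
  rw [this]
  have h2 : (aeval (R := R) fun j : Fin m => (Polynomial.C (X j) : Polynomial (MvPolynomial (Fin m) R))) = (Polynomial.CAlgHom (R := R) (A := MvPolynomial (Fin m) R)).comp (aeval X) := by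
    apply algHom_ext; intro j; simp [Polynomial.CAlgHom]
  rw [h2]; simp

noncomputable def dropLast : MvPolynomial (Fin (m+1)) R →ₐ[R] MvPolynomial (Fin m) R :=
  aeval fun i => if h : i.val < m then X ⟨i.val, h⟩ else 0

lemma dropLast_rename (a : MvPolynomial (Fin m) R) :
    dropLast (rename Fin.castSucc a) = a := by
  rw [dropLast, aeval_rename]
  have : ((fun i : Fin (m+1) => if h : i.val < m then (X (⟨i.val, h⟩ : Fin m) : MvPolynomial (Fin m) R) else 0) ∘ Fin.castSucc) = X := by
    funext j; simp [Function.comp, j.isLt]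
  rw [this, aeval_X_left_apply]

end helpers

lemma splitA_X_last {R : Type*} [CommRing R] {m : ℕ} :
    splitA (R := R) (m := m) (X (Fin.last m)) = Polynomial.X := by
  rw [splitA, aeval_X]; simp

/-- `MT_n ≅ ML^n_n ⋊ MT_{n-1}` (here `n = m+1`): the map
`ψ(h⃗,(n:u;f)) = (h_1,…,h_{n-1}, f + u·x_n)` is a bijection from
`MT_{n-1} × ML^n_n` onto `MT_n`, and it transforms the semidirect operation
`(h⃗,(n:u;f))·(l⃗,(n:v;g)) = (h⃗∘l⃗, (n : u(l⃗)·v ; f(l⃗) + u(l⃗)·g))` — where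
`MT_{n-1}` acts on `ML^n_n` by substitution — into composition in `MT_n`. -/
theorem MT_iso_ML_sdprod_MT (R : Type*) [CommRing R] (m : ℕ) (hm : 1 ≤ m) :
    (∀ h ∈ MT R m, ∀ u f : MvPolynomial (Fin m) R,
        (∀ v : Fin m → R, IsUnit (eval v u)) → pairUp h u f ∈ MT R (m + 1)) ∧
    (∀ (h l : Fin m → MvPolynomial (Fin m) R) (u v f g : MvPolynomial (Fin m) R),
        pairUp h u f = pairUp l v g → h = l ∧ u = v ∧ f = g) ∧
    (∀ p ∈ MT R (m + 1), ∃ h ∈ MT R m, ∃ u f : MvPolynomial (Fin m) R,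
        (∀ v : Fin m → R, IsUnit (eval v u)) ∧ p = pairUp h u f) ∧
    (∀ (h l : Fin m → MvPolynomial (Fin m) R), h ∈ MT R m → l ∈ MT R m →
      ∀ (u v f g : MvPolynomial (Fin m) R),
        vcomp (pairUp h u f) (pairUp l v g) =
          pairUp (fun j => bind₁ l (h j)) (bind₁ l u * v) (bind₁ l f + bind₁ l u * g)) := by
  refine ⟨?_, ?_, ?_, ?_⟩
  · -- membership
    intro h hh u f hu i
    constructor
    · intro hi0
      have hlt : i.val < m := by omega
      obtain ⟨hp, hbij, heq⟩ := (hh ⟨i.val, hlt⟩).1 hi0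
      refine ⟨hp, hbij, ?_⟩
      rw [pairUp_lt h u f i hlt, heq, ← Polynomial.aeval_algHom_apply, rename_X,
        show (⟨i.val, hlt⟩ : Fin m).castSucc = i from Fin.ext rfl]
    · intro hi0
      by_cases hlt : i.val < m
      · obtain ⟨fp, gp, hg, heq⟩ := (hh ⟨i.val, hlt⟩).2 hi0
        refine ⟨fp, gp, hg, ?_⟩
        rw [pairUp_lt h u f i hlt, heq]
        simp only [map_add, map_mul, rename_rename, rename_X]
        first
        | rfl
        | (congr 1 <;> first
          | rfl
          | (funext a; exact Fin.ext rfl)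
          | exact congrArg X (Fin.ext rfl)
          | (congr 1 <;> first
            | rfl
            | (funext a; exact Fin.ext rfl)
            | exact congrArg X (Fin.ext rfl)))
      · have him : i.val = m := by omega
        refine ⟨rename (Fin.cast him.symm) f, rename (Fin.cast him.symm) u, ?_, ?_⟩
        · intro w; rw [eval_rename]; exact hu _
        · rw [pairUp_ge h u f i hlt, rename_rename, rename_rename]
          first
          | rfl
          | (congr 1 <;> first
            | rfl
            | (funext a; exact Fin.ext rfl)
            | exact congrArg X (Fin.ext rfl)
            | (congr 1 <;> first
              | rfl
              | (funext a; exact Fin.ext rfl)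
              | exact congrArg X (Fin.ext rfl)))
  · -- injectivity
    intro h l u v f g heq
    have hh : h = l := by
      funext j
      have hjlt : (Fin.castSucc j).val < m := j.isLt
      have hcf := congrFun heq (Fin.castSucc j)
      rw [pairUp_lt _ _ _ _ hjlt, pairUp_lt _ _ _ _ hjlt] at hcf
      have h2 := rename_injective (R := R) Fin.castSucc (Fin.castSucc_injective m) hcf
      simpa using h2
    have hlast : ¬ (Fin.last m).val < m := by simp
    have hcf := congrFun heq (Fin.last m)
    rw [pairUp_ge _ _ _ _ hlast, pairUp_ge _ _ _ _ hlast] at hcf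
    have hA := congrArg splitA hcf
    simp only [map_add, map_mul, splitA_rename, splitA_X_last] at hA
    have h0 := congrArg (fun q => Polynomial.coeff q 0) hA
    have h1 := congrArg (fun q => Polynomial.coeff q 1) hA
    simp [Polynomial.coeff_X_mul] at h0 h1
    exact ⟨hh, Polynomial.C_injective (by simpa using h1), Polynomial.C_injective (by simpa using h0)⟩
  · -- surjectivity
    intro p hp
    have key : ∀ j : Fin m, rename Fin.castSucc (dropLast (p (Fin.castSucc j))) = p (Fin.castSucc j) := by
      intro j
      obtain ⟨w, hw⟩ : ∃ w, p (Fin.castSucc j) = rename Fin.castSucc w := by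
        by_cases hj0 : j.val = 0
        · obtain ⟨q, _, heq⟩ := (hp (Fin.castSucc j)).1 hj0
          refine ⟨Polynomial.aeval (X j) q, ?_⟩
          rw [heq, ← Polynomial.aeval_algHom_apply, rename_X]
        · obtain ⟨ff, gg, _, heq⟩ := (hp (Fin.castSucc j)).2 hj0
          refine ⟨rename (Fin.castLE j.isLt.le) ff + X j * rename (Fin.castLE j.isLt.le) gg, ?_⟩
          rw [heq]
          simp only [map_add, map_mul, rename_rename, rename_X]
          first
          | rfl
          | (congr 1 <;> first
            | rfl
            | (funext a; exact Fin.ext rfl)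
            | exact congrArg X (Fin.ext rfl)
            | (congr 1 <;> first
              | rfl
              | (funext a; exact Fin.ext rfl)
              | exact congrArg X (Fin.ext rfl)))
      rw [hw, dropLast_rename]
    have hMT : (fun j => dropLast (p (Fin.castSucc j))) ∈ MT R m := by
      intro j
      constructor
      · intro hj0
        obtain ⟨q, hbij, heq⟩ := (hp (Fin.castSucc j)).1 hj0
        refine ⟨q, hbij, ?_⟩
        apply rename_injective (R := R) Fin.castSucc (Fin.castSucc_injective m)
        rw [key j, heq, ← Polynomial.aeval_algHom_apply, rename_X]
      · intro hj0
        obtain ⟨ff, gg, hgg, heq⟩ := (hp (Fin.castSucc j)).2 hj0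
        refine ⟨ff, gg, hgg, ?_⟩
        apply rename_injective (R := R) Fin.castSucc (Fin.castSucc_injective m)
        rw [key j, heq]
        simp only [map_add, map_mul, rename_rename, rename_X]
        first
        | rfl
        | (congr 1 <;> first
          | rfl
          | (funext a; exact Fin.ext rfl)
          | exact congrArg X (Fin.ext rfl)
          | (congr 1 <;> first
            | rfl
            | (funext a; exact Fin.ext rfl)
            | exact congrArg X (Fin.ext rfl)))
    obtain ⟨ff, gg, hgg, heq⟩ := (hp (Fin.last m)).2 (by show m ≠ 0; omega)
    refine ⟨fun j => dropLast (p (Fin.castSucc j)), hMT, gg, ff, hgg, ?_⟩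
    funext i
    by_cases hlt : i.val < m
    · rw [pairUp_lt _ _ _ i hlt, key ⟨i.val, hlt⟩]
      exact congrArg p (Fin.ext rfl)
    · have hi : i = Fin.last m := Fin.ext (by simp only [Fin.val_last]; omega)
      subst hi
      rw [pairUp_ge _ _ _ _ hlt, heq]
      first
      | rfl
      | (congr 1 <;> first
        | rfl
        | (funext a; exact Fin.ext rfl)
        | exact congrArg X (Fin.ext rfl)
        | (congr 1 <;> first
          | rfl
          | (funext a; exact Fin.ext rfl)
          | exact congrArg X (Fin.ext rfl)))
  · -- composition
    intro h l _ _ u v f g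
    funext i
    show bind₁ (pairUp l v g) (pairUp h u f i) = _
    by_cases hlt : i.val < m
    · rw [pairUp_lt h u f i hlt, bind₁_pairUp_rename, pairUp_lt _ _ _ i hlt]
    · rw [pairUp_ge h u f i hlt, pairUp_ge _ _ _ i hlt, map_add, map_mul,
        bind₁_pairUp_rename, bind₁_pairUp_rename, bind₁_X_right, pairUp_ge l v g i hlt]
      simp only [map_add, map_mul]
      ring
end

section
/- Let R be a finite commutative local ring with residue field of order q, and k ≥ 1. Then the ratio of the number of unit-valued polynomial functions R^k → R^× (that is, polynomial functions all of whose values are units) to the total number of polynomial functions R^k → R equals (q-1)^{q^k} / q^{q^k}. -/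
open MvPolynomial

/-- Fiber-counting: if every fiber of `f` has `n` elements, `card α = card β * n`. -/
lemma aux_card_fibers {α β : Type*} [Finite α] [Finite β] (f : α → β) (n : ℕ)
    (h : ∀ b, Nat.card {a // f a = b} = n) : Nat.card α = Nat.card β * n := by
  classical
  haveI := Fintype.ofFinite α
  haveI := Fintype.ofFinite β
  haveI : ∀ b, Fintype {a // f a = b} := fun b => Fintype.ofFinite _
  have hfib : ∀ b, Fintype.card {a // f a = b} = n := fun b => by
    rw [← Nat.card_eq_fintype_card]; exact h b
  calc Nat.card α = Nat.card (Σ b : β, {a // f a = b}) :=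
        (Nat.card_congr (Equiv.sigmaFiberEquiv f)).symm
    _ = Nat.card β * n := by
        rw [Nat.card_eq_fintype_card, Fintype.card_sigma, Nat.card_eq_fintype_card]
        simp [hfib]

/-- Interpolation over a finite field: every function is a polynomial function. -/
lemma aux_exists_poly {K : Type*} [Field K] [Fintype K] {σ : Type*} [Fintype σ]
    (G : (σ → K) → K) : ∃ g : MvPolynomial σ K, ∀ v, eval v g = G v := by
  classical
  refine ⟨∑ n : σ → K, MvPolynomial.C (G n) * MvPolynomial.indicator n, fun v => ?_⟩
  rw [map_sum, Finset.sum_eq_single v]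
  · simp [MvPolynomial.eval_indicator_apply_eq_one]
  · intro b _ hb
    simp [MvPolynomial.eval_indicator_apply_eq_zero v b (Ne.symm hb)]
  · simp

/-- Let `R` be a finite local commutative ring with residue field
of order `q`, and `k ≥ 1`.  Then
`(#unit-valued polynomial functions on R^k) / (#polynomial functions on R^k)
  = (q-1)^{q^k} / q^{q^k}`, stated multiplicatively over `ℕ`. -/
theorem unitValued_ratio (R : Type*) [CommRing R] [IsLocalRing R] [Fintype R]
    (k : ℕ) (hk : 1 ≤ k) (q : ℕ) (hq : q = Nat.card (IsLocalRing.ResidueField R)) :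
    Nat.card {F : (Fin k → R) → R //
        (∃ f : MvPolynomial (Fin k) R, ∀ v : Fin k → R, F v = eval v f) ∧
        ∀ v : Fin k → R, IsUnit (F v)} * q ^ q ^ k =
      Nat.card {F : (Fin k → R) → R //
        ∃ f : MvPolynomial (Fin k) R, ∀ v : Fin k → R, F v = eval v f} * (q - 1) ^ q ^ k := by
  classical
  set κ := IsLocalRing.ResidueField R with hκ
  haveI : Finite κ := Finite.of_surjective _ IsLocalRing.residue_surjective
  haveI : Fintype κ := Fintype.ofFinite κ
  set φ : R →+* κ := IsLocalRing.residue R with hφdef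
  have hφ : Function.Surjective φ := IsLocalRing.residue_surjective
  set σf : κ → R := Function.surjInv hφ with hσdef
  have hσ : ∀ x, φ (σf x) = x := Function.surjInv_eq hφ
  have hUnit : ∀ a : R, IsUnit a ↔ φ a ≠ 0 := by
    intro a
    constructor
    · intro h
      exact (h.map φ).ne_zero
    · intro h
      by_contra hu
      exact h (Ideal.Quotient.eq_zero_iff_mem.2 (IsLocalRing.mem_maximalIdeal a |>.2 hu))
  -- reduction of evaluation
  have h2 : ∀ (f : MvPolynomial (Fin k) R) (u : Fin k → R),
      φ (eval u f) = eval (⇑φ ∘ u) (map φ f) := by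
    intro f u
    calc φ (eval u f) = eval₂ (φ.comp (RingHom.id R)) (⇑φ ∘ u) f :=
          eval₂_comp_left φ (RingHom.id R) u f
      _ = eval₂ φ (⇑φ ∘ u) f := by rw [RingHom.comp_id]
      _ = eval (⇑φ ∘ u) (map φ f) := (eval_map φ (⇑φ ∘ u) f).symm
  set P := {F : (Fin k → R) → R //
      ∃ f : MvPolynomial (Fin k) R, ∀ v : Fin k → R, F v = eval v f} with hP
  set red : P → ((Fin k → κ) → κ) := fun F w => φ (F.1 (σf ∘ w)) with hred
  have key : ∀ (F : P) (v : Fin k → R), φ (F.1 v) = red F (⇑φ ∘ v) := by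
    rintro ⟨F, f, hf⟩ v
    show φ (F v) = φ (F (σf ∘ (⇑φ ∘ v)))
    rw [hf, hf, h2, h2]
    have hcomp : ⇑φ ∘ (σf ∘ (⇑φ ∘ v)) = ⇑φ ∘ v := funext fun i => hσ _
    rw [hcomp]
  have hsurj : ∀ G : (Fin k → κ) → κ, ∃ F : P, red F = G := by
    intro G
    obtain ⟨g, hg⟩ := aux_exists_poly G
    obtain ⟨f, hf⟩ := MvPolynomial.map_surjective φ hφ g
    refine ⟨⟨fun v => eval v f, f, fun _ => rfl⟩, ?_⟩
    funext w
    show φ (eval (σf ∘ w) f) = G w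
    rw [h2, hf]
    have : ⇑φ ∘ (σf ∘ w) = w := funext fun i => hσ _
    rw [this, hg]
  -- all fibers of red have the same cardinality
  have hfib : ∀ G G' : (Fin k → κ) → κ,
      Nat.card {F : P // red F = G} = Nat.card {F : P // red F = G'} := by
    intro G G'
    obtain ⟨F₀, hF₀⟩ := hsurj G
    obtain ⟨F₀', hF₀'⟩ := hsurj G'
    refine Nat.card_congr ⟨fun F => ⟨⟨fun v => F.1.1 v - F₀.1 v + F₀'.1 v, ?_⟩, ?_⟩,
      fun F => ⟨⟨fun v => F.1.1 v - F₀'.1 v + F₀.1 v, ?_⟩, ?_⟩, ?_, ?_⟩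
    · obtain ⟨f, hf⟩ := F.1.2
      obtain ⟨f₀, hf₀⟩ := F₀.2
      obtain ⟨f₀', hf₀'⟩ := F₀'.2
      exact ⟨f - f₀ + f₀', fun v => by simp [hf, hf₀, hf₀']⟩
    · funext w
      show φ (F.1.1 (σf ∘ w) - F₀.1 (σf ∘ w) + F₀'.1 (σf ∘ w)) = G' w
      have e1 : φ (F.1.1 (σf ∘ w)) = G w := congrFun F.2 w
      have e2 : φ (F₀.1 (σf ∘ w)) = G w := congrFun hF₀ w
      have e3 : φ (F₀'.1 (σf ∘ w)) = G' w := congrFun hF₀' w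
      simp [e1, e2, e3]
    · obtain ⟨f, hf⟩ := F.1.2
      obtain ⟨f₀, hf₀⟩ := F₀.2
      obtain ⟨f₀', hf₀'⟩ := F₀'.2
      exact ⟨f - f₀' + f₀, fun v => by simp [hf, hf₀, hf₀']⟩
    · funext w
      show φ (F.1.1 (σf ∘ w) - F₀'.1 (σf ∘ w) + F₀.1 (σf ∘ w)) = G w
      have e1 : φ (F.1.1 (σf ∘ w)) = G' w := congrFun F.2 w
      have e2 : φ (F₀'.1 (σf ∘ w)) = G' w := congrFun hF₀' w
      have e3 : φ (F₀.1 (σf ∘ w)) = G w := congrFun hF₀ w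
      simp [e1, e2, e3]
    · intro F
      exact Subtype.ext (Subtype.ext (funext fun v => by ring))
    · intro F
      exact Subtype.ext (Subtype.ext (funext fun v => by ring))
  set N := Nat.card {F : P // red F = fun _ => (1 : κ)} with hN
  have hPcard : Nat.card P = q ^ q ^ k * N := by
    rw [aux_card_fibers red N (fun G => hfib G _)]
    congr 1
    rw [Nat.card_fun, Nat.card_fun, hq]
    simp [Nat.card_eq_fintype_card]
  set U := {F : (Fin k → R) → R //
      (∃ f : MvPolynomial (Fin k) R, ∀ v : Fin k → R, F v = eval v f) ∧
      ∀ v : Fin k → R, IsUnit (F v)} with hU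
  have eU : U ≃ {F : P // ∀ w, red F w ≠ 0} := by
    refine ⟨fun F => ⟨⟨F.1, F.2.1⟩, fun w => ?_⟩, fun F => ⟨F.1.1, F.1.2, fun v => ?_⟩, ?_, ?_⟩
    · exact (hUnit _).1 (F.2.2 (σf ∘ w))
    · refine (hUnit _).2 ?_
      rw [key F.1 v]
      exact F.2 (⇑φ ∘ v)
    · intro F; rfl
    · intro F; rfl
  set red' : {F : P // ∀ w, red F w ≠ 0} → {G : (Fin k → κ) → κ // ∀ w, G w ≠ 0} :=
    fun F => ⟨red F.1, F.2⟩ with hred'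
  have hfib' : ∀ G : {G : (Fin k → κ) → κ // ∀ w, G w ≠ 0},
      Nat.card {F // red' F = G} = N := by
    intro G
    rw [hN, ← hfib G.1 (fun _ => (1 : κ))]
    refine Nat.card_congr ⟨fun F => ⟨F.1.1, ?_⟩, fun F => ⟨⟨F.1, ?_⟩, ?_⟩, ?_, ?_⟩
    · exact congrArg Subtype.val F.2
    · intro w; rw [F.2]; exact G.2 w
    · exact Subtype.ext F.2
    · intro F; rfl
    · intro F; rfl
  have hUcard : Nat.card U = (q - 1) ^ q ^ k * N := by
    rw [Nat.card_congr eU, aux_card_fibers red' N hfib']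
    congr 1
    have e2 : {G : (Fin k → κ) → κ // ∀ w, G w ≠ 0} ≃ ((Fin k → κ) → {x : κ // x ≠ 0}) :=
      Equiv.subtypePiEquivPi (p := fun (_ : Fin k → κ) (x : κ) => x ≠ 0)
    rw [Nat.card_congr e2, Nat.card_fun]
    have h1 : Nat.card {x : κ // x ≠ 0} = q - 1 := by
      rw [Nat.card_eq_fintype_card]
      have hc := Fintype.card_subtype_compl (p := fun x : κ => x = 0)
      rw [Fintype.card_subtype_eq (0 : κ)] at hc
      simp only [ne_eq]
      rw [hc, hq, Nat.card_eq_fintype_card]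
    rw [h1]
    congr 1
    rw [Nat.card_fun, hq]
    simp [Nat.card_eq_fintype_card]
  rw [hUcard, hPcard]
  ring
end
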